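/- arXiv:2205.13814 — 2 statements merged into one kernel-verified Lean document; each statement's English description precedes it below -/
import Mathlib

section
/- Let φ denote the ReLU function applied entrywise. Suppose W ∈ ℝ^{m×m}, U ∈ ℝ^{m×d}, a ∈ ℝ^m, X ∈ ℝ^{d×n}, y ∈ ℝⁿ satisfy ‖W‖₂ ≤ ρ̄_w < 1, ‖U‖₂ ≤ ρ̄_u, ‖a‖₂ ≤ ρ̄_a. Let Z = φ(W Z + U X) be an equilibrium point, set ŷ = Zᵀa, let D ∈ ℝ^{mn×mn} be the diagonal matrix of entrywise indicators 1{W Z + U X ≥ 0} of vec(W Z + U X), J = I_{mn} − D(I_n ⊗ W), and R = (aᵀ ⊗ I_n) J^{-1} D. Define c_w = ρ̄_u ρ̄_a/(1−ρ̄_w)², c_u = ρ̄_a/(1−ρ̄_w), c_a = ρ̄_u/(1−ρ̄_w). Then ‖(Z ⊗ I_m) Rᵀ(ŷ − y)‖₂ ≤ c_w ‖X‖_F ‖ŷ − y‖₂, ‖(X ⊗ I_m) Rᵀ(ŷ − y)‖₂ ≤ c_u ‖X‖_F ‖ŷ − y‖₂, and ‖Z(ŷ − y)‖₂ ≤ c_a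 ‖X‖_F ‖ŷ − y‖₂. -/
open scoped BigOperators Matrix Kronecker
open MeasureTheory ProbabilityTheory Filter

noncomputable section

/-- ReLU on reals. -/
def relu (x : ℝ) : ℝ := max x 0

/-- Entrywise ReLU on matrices. -/
def reluM {α β : Type*} (A : Matrix α β ℝ) : Matrix α β ℝ :=
  Matrix.of fun i j => relu (A i j)

/-- Frobenius norm of a matrix. -/
def frobNorm {α β : Type*} [Fintype α] [Fintype β] (A : Matrix α β ℝ) : ℝ :=
  Real.sqrt (∑ i, ∑ j, (A i j) ^ 2)

/-- Euclidean norm of a vector. -/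
def euclNorm {α : Type*} [Fintype α] (v : α → ℝ) : ℝ :=
  Real.sqrt (∑ i, (v i) ^ 2)

/-- Operator (spectral) norm of a real matrix. -/
def opNorm {α β : Type*} [Fintype α] [Fintype β] [DecidableEq β]
    (A : Matrix α β ℝ) : ℝ :=
  ‖(LinearMap.toContinuousLinearMap (Matrix.toEuclideanLin A))‖

/-- Least eigenvalue of a square matrix, as the infimum of the Rayleigh
quotient over the unit sphere. -/
def lamMin {n : ℕ} (A : Matrix (Fin n) (Fin n) ℝ) : ℝ :=
  ⨅ v : {v : Fin n → ℝ // ∑ i, (v i) ^ 2 = 1}, ∑ i, A.mulVec v.1 i * v.1 i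

/-- The dual activation `Q(x) = (√(1-x²) + (π - arccos x)·x)/π` of ReLU. -/
def Qf (x : ℝ) : ℝ := (Real.sqrt (1 - x ^ 2) + (Real.pi - Real.arccos x) * x) / Real.pi

/-- Expectation of `φ(u)·φ(v)` for `(u,v)` a centered Gaussian vector with
covariance `[[a, c], [c, b]]`, written via the representation `u = √a·g₁`,
`v = (c/√a)·g₁ + √(b - c²/a)·g₂` with `g₁, g₂` i.i.d. standard Gaussians. -/
def gaussRelu2 (a b c : ℝ) : ℝ :=
  ∫ p : ℝ × ℝ, relu (Real.sqrt a * p.1) *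
      relu (c / Real.sqrt a * p.1 + Real.sqrt (b - c ^ 2 / a) * p.2)
    ∂((gaussianReal 0 1).prod (gaussianReal 0 1))

/-- The population Gram matrices `K^{(l)}`, defined recursively from the
pairwise input correlations `c i j = xᵢᵀxⱼ/d`:  `K^{(0)} = 0` and
`K^{(l)}_{ij} = 2·E[φ(u)φ(v)]` for `(u,v) ~ N(0, Λ^{(l)}_{ij})`. -/
def popGram {n : ℕ} (sw2 : ℝ) (c : Fin n → Fin n → ℝ) : ℕ → Matrix (Fin n) (Fin n) ℝ
  | 0 => 0
  | l + 1 => Matrix.of fun i j =>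
      2 * gaussRelu2 (sw2 * popGram sw2 c l i i + 1) (sw2 * popGram sw2 c l j j + 1)
        (sw2 * popGram sw2 c l i j + c i j)

/-- The iterates `Z^{(0)} = 0`, `Z^{(l+1)} = φ(W Z^{(l)} + U X)`. -/
def Zit {m d n : ℕ} (W : Matrix (Fin m) (Fin m) ℝ) (U : Matrix (Fin m) (Fin d) ℝ)
    (X : Matrix (Fin d) (Fin n) ℝ) : ℕ → Matrix (Fin m) (Fin n) ℝ
  | 0 => 0
  | l + 1 => reluM (W * Zit W U X l + U * X)

end

/-!
The gradients are `R` or `Z` composed with Kronecker factors, so the claim reduces to three norm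
estimates. `D` is a 0/1 diagonal, so `‖D (I ⊗ W)‖₂ ≤ ‖W‖₂ ≤ ρ̄_w < 1`, and the Neumann series
`J⁻¹ = ∑ₖ (D (I ⊗ W))ᵏ` gives `‖J⁻¹‖₂ ≤ 1/(1 - ρ̄_w)`, hence `‖R‖₂ ≤ ρ̄_a/(1 - ρ̄_w)`.
ReLU does not increase absolute values, so the equilibrium equation gives
`‖Z‖_F ≤ ρ̄_w ‖Z‖_F + ρ̄_u ‖X‖_F`, i.e. `‖Z‖_F ≤ ρ̄_u ‖X‖_F/(1 - ρ̄_w)`. Finally, writing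
`v = vec V`, `(A ⊗ I) v = vec (V Aᵀ)`, so `‖(A ⊗ I) v‖₂ ≤ ‖A‖_F ‖v‖₂`.
-/

section

open Matrix

variable {α β γ δ : Type*} [Fintype α] [Fintype β] [Fintype γ] [Fintype δ]

theorem euclNorm_eq_norm (v : α → ℝ) : euclNorm v = ‖WithLp.toLp 2 v‖ := by
  simp [euclNorm, EuclideanSpace.norm_eq]

theorem euclNorm_nonneg (v : α → ℝ) : 0 ≤ euclNorm v := Real.sqrt_nonneg _

section L2Operator

open scoped Matrix.Norms.L2Operator

variable [DecidableEq β] [DecidableEq γ]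

theorem opNorm_eq_norm (A : Matrix α β ℝ) : opNorm A = ‖A‖ := rfl

theorem opNorm_nonneg (A : Matrix α β ℝ) : 0 ≤ opNorm A := norm_nonneg _

theorem euclNorm_mulVec_le (A : Matrix α β ℝ) (v : β → ℝ) :
    euclNorm (A *ᵥ v) ≤ opNorm A * euclNorm v := by
  rw [euclNorm_eq_norm, euclNorm_eq_norm, opNorm_eq_norm]
  exact l2_opNorm_mulVec A (WithLp.toLp 2 v)

theorem opNorm_le_of_euclNorm_mulVec_le {A : Matrix α β ℝ} {C : ℝ} (hC : 0 ≤ C)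
    (h : ∀ v, euclNorm (A *ᵥ v) ≤ C * euclNorm v) : opNorm A ≤ C :=
  ContinuousLinearMap.opNorm_le_bound _ hC fun v => by
    have hv := h v.ofLp
    rwa [euclNorm_eq_norm, euclNorm_eq_norm] at hv

theorem opNorm_transpose [DecidableEq α] (A : Matrix α β ℝ) : opNorm Aᵀ = opNorm A :=
  l2_opNorm_conjTranspose A

theorem opNorm_mul_le_of_le {A : Matrix α β ℝ} {B : Matrix β γ ℝ} {a b : ℝ}
    (hA : opNorm A ≤ a) (hB : opNorm B ≤ b) : opNorm (A * B) ≤ a * b :=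
  (l2_opNorm_mul A B).trans (mul_le_mul hA hB (opNorm_nonneg B) ((opNorm_nonneg A).trans hA))

theorem opNorm_diagonal_le_one {d : β → ℝ} (hd : ∀ i, |d i| ≤ 1) : opNorm (diagonal d) ≤ 1 := by
  rw [opNorm_eq_norm, l2_opNorm_diagonal]
  exact (pi_norm_le_iff_of_nonneg zero_le_one).mpr hd

theorem opNorm_inv_one_sub_le {M : Matrix β β ℝ} {ρ : ℝ} (hM : opNorm M ≤ ρ) (hρ : ρ < 1) :
    opNorm (1 - M)⁻¹ ≤ (1 - ρ)⁻¹ := by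
  rw [opNorm_eq_norm] at hM ⊢
  have hM1 : ‖M‖ < 1 := hM.trans_lt hρ
  have h1 : ‖(1 : Matrix β β ℝ)‖ ≤ 1 := by
    rw [← diagonal_one, ← opNorm_eq_norm]
    exact opNorm_diagonal_le_one (by simp)
  rw [inv_eq_left_inv (geom_series_mul_neg M hM1)]
  calc ‖∑' k, M ^ k‖ ≤ ‖(1 : Matrix β β ℝ)‖ - 1 + (1 - ‖M‖)⁻¹ :=
        tsum_geometric_le_of_norm_lt_one M hM1
    _ ≤ (1 - ρ)⁻¹ := by
        have : (1 - ‖M‖)⁻¹ ≤ (1 - ρ)⁻¹ := by gcongr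
        linarith

end L2Operator

section Frobenius

attribute [local instance] Matrix.frobeniusSeminormedAddCommGroup

theorem frobNorm_eq_norm (A : Matrix α β ℝ) : frobNorm A = ‖A‖ := by
  simp only [frobenius_norm_def, frobNorm, Real.sqrt_eq_rpow, Real.norm_eq_abs, Real.rpow_two,
    sq_abs, one_div]

theorem frobNorm_nonneg (A : Matrix α β ℝ) : 0 ≤ frobNorm A := Real.sqrt_nonneg _

theorem frobNorm_add_le (A B : Matrix α β ℝ) : frobNorm (A + B) ≤ frobNorm A + frobNorm B := by
  simpa only [frobNorm_eq_norm] using norm_add_le A B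

theorem frobNorm_transpose (A : Matrix α β ℝ) : frobNorm Aᵀ = frobNorm A := by
  simpa only [frobNorm_eq_norm] using frobenius_norm_transpose A

theorem frobNorm_mul_le (A : Matrix α β ℝ) (B : Matrix β γ ℝ) :
    frobNorm (A * B) ≤ frobNorm A * frobNorm B := by
  simpa only [frobNorm_eq_norm] using frobenius_norm_mul A B

theorem frobNorm_replicateCol (v : α → ℝ) :
    frobNorm (replicateCol Unit v) = euclNorm v := by
  rw [frobNorm_eq_norm, euclNorm_eq_norm, frobenius_norm_replicateCol]

theorem frobNorm_replicateRow (v : α → ℝ) :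
    frobNorm (replicateRow Unit v) = euclNorm v := by
  rw [frobNorm_eq_norm, euclNorm_eq_norm, frobenius_norm_replicateRow]

end Frobenius

theorem frobNorm_eq_euclNorm_vec (A : Matrix α β ℝ) : frobNorm A = euclNorm (vec A) := by
  rw [frobNorm, euclNorm, Fintype.sum_prod_type, Finset.sum_comm]
  rfl

theorem euclNorm_mulVec_le_frobNorm (A : Matrix α β ℝ) (v : β → ℝ) :
    euclNorm (A *ᵥ v) ≤ frobNorm A * euclNorm v := by
  rw [← frobNorm_replicateCol, ← frobNorm_replicateCol, replicateCol_mulVec]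
  exact frobNorm_mul_le _ _

theorem frobNorm_vecMulVec_le (v : α → ℝ) (w : β → ℝ) :
    frobNorm (vecMulVec v w) ≤ euclNorm v * euclNorm w := by
  rw [vecMulVec_eq Unit, ← frobNorm_replicateCol, ← frobNorm_replicateRow]
  exact frobNorm_mul_le _ _

theorem frobNorm_reluM_le (A : Matrix α β ℝ) : frobNorm (reluM A) ≤ frobNorm A := by
  refine Real.sqrt_le_sqrt (Finset.sum_le_sum fun i _ => Finset.sum_le_sum fun j _ => ?_)
  have h : |relu (A i j)| ≤ |A i j| := abs_max_le_max_abs_abs.trans (by simp)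
  exact sq_le_sq.mpr h

theorem frobNorm_eq_sqrt_sum_sq_euclNorm (M : Matrix α β ℝ) :
    frobNorm M = √(∑ i, euclNorm (M i) ^ 2) := by
  simp only [frobNorm, euclNorm, Real.sq_sqrt (Finset.sum_nonneg fun _ _ => sq_nonneg _)]

theorem frobNorm_mul_le_opNorm_mul [DecidableEq β] (A : Matrix α β ℝ) (B : Matrix β γ ℝ) :
    frobNorm (A * B) ≤ opNorm A * frobNorm B := by
  have hcol : ∀ j, (A * B)ᵀ j = A *ᵥ Bᵀ j := fun j => rfl
  rw [← frobNorm_transpose, ← frobNorm_transpose B, frobNorm_eq_sqrt_sum_sq_euclNorm,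
    frobNorm_eq_sqrt_sum_sq_euclNorm]
  calc √(∑ j, euclNorm ((A * B)ᵀ j) ^ 2) ≤ √(∑ j, (opNorm A * euclNorm (Bᵀ j)) ^ 2) := by
        gcongr with j
        · exact euclNorm_nonneg _
        · exact hcol j ▸ euclNorm_mulVec_le A (Bᵀ j)
    _ = opNorm A * √(∑ j, euclNorm (Bᵀ j) ^ 2) := by
        simp only [mul_pow, ← Finset.mul_sum]
        rw [Real.sqrt_mul (sq_nonneg _), Real.sqrt_sq (opNorm_nonneg A)]

theorem opNorm_one_kronecker_le [DecidableEq β] [DecidableEq γ] (W : Matrix α β ℝ) :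
    opNorm ((1 : Matrix γ γ ℝ) ⊗ₖ W) ≤ opNorm W := by
  refine opNorm_le_of_euclNorm_mulVec_le (opNorm_nonneg W) fun v => ?_
  let V : Matrix β γ ℝ := of fun j c => v (c, j)
  calc euclNorm (((1 : Matrix γ γ ℝ) ⊗ₖ W) *ᵥ vec V) = frobNorm (W * V) := by
        rw [← vec_mul_eq_mulVec, frobNorm_eq_euclNorm_vec]
    _ ≤ opNorm W * frobNorm V := frobNorm_mul_le_opNorm_mul W V
    _ = opNorm W * euclNorm (vec V) := by rw [frobNorm_eq_euclNorm_vec]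

theorem euclNorm_kronecker_one_mulVec_le [DecidableEq γ] (A : Matrix α β ℝ) (w : β × γ → ℝ) :
    euclNorm ((A ⊗ₖ (1 : Matrix γ γ ℝ)) *ᵥ w) ≤ frobNorm A * euclNorm w := by
  let V : Matrix γ β ℝ := of fun c j => w (j, c)
  calc euclNorm ((A ⊗ₖ (1 : Matrix γ γ ℝ)) *ᵥ vec V) = frobNorm (V * Aᵀ) := by
        rw [kronecker_mulVec_vec, Matrix.one_mul, frobNorm_eq_euclNorm_vec]
    _ ≤ frobNorm V * frobNorm Aᵀ := frobNorm_mul_le V Aᵀ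
    _ = frobNorm A * euclNorm (vec V) := by
        rw [frobNorm_transpose, frobNorm_eq_euclNorm_vec, mul_comm]

/-- The matrix `aᵀ ⊗ I` of the paper, mapping `vec Z` to `Zᵀ a`. -/
def readout [DecidableEq α] (a : β → ℝ) : Matrix α (α × β) ℝ :=
  of fun j p => if p.1 = j then a p.2 else 0

omit [Fintype β] in
theorem readout_transpose_mulVec [DecidableEq α] (a : β → ℝ) (e : α → ℝ) :
    (readout a)ᵀ *ᵥ e = vec (vecMulVec a e) := by
  ext ⟨j, i⟩
  simp [readout, mulVec, dotProduct, vecMulVec, mul_comm]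

theorem opNorm_readout_le [DecidableEq α] [DecidableEq β] (a : β → ℝ) :
    opNorm (readout a : Matrix α (α × β) ℝ) ≤ euclNorm a := by
  rw [← opNorm_transpose]
  refine opNorm_le_of_euclNorm_mulVec_le (euclNorm_nonneg a) fun e => ?_
  rw [readout_transpose_mulVec, ← frobNorm_eq_euclNorm_vec]
  exact frobNorm_vecMulVec_le a e

theorem frobNorm_le_of_eq_reluM [DecidableEq α] [DecidableEq δ] {W : Matrix α α ℝ}
    {U : Matrix α δ ℝ} {X : Matrix δ β ℝ} {Z : Matrix α β ℝ} {ρw ρu : ℝ}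
    (hW : opNorm W ≤ ρw) (hρw : ρw < 1) (hU : opNorm U ≤ ρu)
    (hZ : Z = reluM (W * Z + U * X)) :
    frobNorm Z ≤ ρu * frobNorm X / (1 - ρw) := by
  have hrec : frobNorm Z ≤ ρw * frobNorm Z + ρu * frobNorm X :=
    calc frobNorm Z ≤ frobNorm (W * Z + U * X) :=
          (congrArg frobNorm hZ).trans_le (frobNorm_reluM_le _)
      _ ≤ frobNorm (W * Z) + frobNorm (U * X) := frobNorm_add_le _ _
      _ ≤ ρw * frobNorm Z + ρu * frobNorm X := by
          gcongr
          · exact (frobNorm_mul_le_opNorm_mul W Z).trans (by gcongr; exact frobNorm_nonneg Z)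
          · exact (frobNorm_mul_le_opNorm_mul U X).trans (by gcongr; exact frobNorm_nonneg X)
  rw [le_div_iff₀ (by linarith)]
  linarith

end

theorem gradient_norm_bounds_general {m d n : ℕ}
    (W : Matrix (Fin m) (Fin m) ℝ) (U : Matrix (Fin m) (Fin d) ℝ) (a : Fin m → ℝ)
    (X : Matrix (Fin d) (Fin n) ℝ) (y : Fin n → ℝ) (ρw ρu ρa : ℝ)
    (hW : opNorm W ≤ ρw) (hρw : ρw < 1) (hU : opNorm U ≤ ρu) (ha : euclNorm a ≤ ρa)
    (Z : Matrix (Fin m) (Fin n) ℝ) (hZ : Z = reluM (W * Z + U * X))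
    (yhat : Fin n → ℝ)
    (D : Matrix (Fin n × Fin m) (Fin n × Fin m) ℝ)
    (hD : D = Matrix.diagonal fun p => if 0 ≤ (W * Z + U * X) p.2 p.1 then (1 : ℝ) else 0)
    (J : Matrix (Fin n × Fin m) (Fin n × Fin m) ℝ)
    (hJ : J = 1 - D * ((1 : Matrix (Fin n) (Fin n) ℝ) ⊗ₖ W))
    (R : Matrix (Fin n) (Fin n × Fin m) ℝ)
    (hR : R = (Matrix.of fun j p => if p.1 = j then a p.2 else 0 :
        Matrix (Fin n) (Fin n × Fin m) ℝ) * J⁻¹ * D)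
    (cw cu ca : ℝ) (hcw : cw = ρu * ρa / (1 - ρw) ^ 2)
    (hcu : cu = ρa / (1 - ρw)) (hca : ca = ρu / (1 - ρw)) :
    euclNorm ((Z ⊗ₖ (1 : Matrix (Fin m) (Fin m) ℝ)).mulVec (Rᵀ.mulVec (yhat - y))) ≤
        cw * frobNorm X * euclNorm (yhat - y) ∧
      euclNorm ((X ⊗ₖ (1 : Matrix (Fin m) (Fin m) ℝ)).mulVec (Rᵀ.mulVec (yhat - y))) ≤
        cu * frobNorm X * euclNorm (yhat - y) ∧
      euclNorm (Z.mulVec (yhat - y)) ≤ ca * frobNorm X * euclNorm (yhat - y) := by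
  set e := yhat - y
  have hD1 : opNorm D ≤ 1 := hD ▸ opNorm_diagonal_le_one fun p => by split_ifs <;> simp
  have hM : opNorm (D * ((1 : Matrix (Fin n) (Fin n) ℝ) ⊗ₖ W)) ≤ ρw := by
    simpa only [one_mul] using opNorm_mul_le_of_le hD1 ((opNorm_one_kronecker_le W).trans hW)
  have hJinv : opNorm J⁻¹ ≤ (1 - ρw)⁻¹ := hJ ▸ opNorm_inv_one_sub_le hM hρw
  have hRnorm : opNorm R ≤ ρa / (1 - ρw) := by
    rw [hR, div_eq_mul_inv, ← mul_one (ρa * _)]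
    exact opNorm_mul_le_of_le (opNorm_mul_le_of_le ((opNorm_readout_le a).trans ha) hJinv) hD1
  have hRe : euclNorm (Rᵀ *ᵥ e) ≤ ρa / (1 - ρw) * euclNorm e :=
    (euclNorm_mulVec_le _ e).trans <| by
      rw [opNorm_transpose]; exact mul_le_mul_of_nonneg_right hRnorm (euclNorm_nonneg e)
  have hZX : frobNorm Z ≤ ρu * frobNorm X / (1 - ρw) := frobNorm_le_of_eq_reluM hW hρw hU hZ
  refine ⟨?_, ?_, ?_⟩
  · calc _ ≤ frobNorm Z * euclNorm (Rᵀ *ᵥ e) := euclNorm_kronecker_one_mulVec_le Z _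
      _ ≤ ρu * frobNorm X / (1 - ρw) * (ρa / (1 - ρw) * euclNorm e) :=
          mul_le_mul hZX hRe (euclNorm_nonneg _) ((frobNorm_nonneg Z).trans hZX)
      _ = cw * frobNorm X * euclNorm e := by rw [hcw, sq, ← div_div]; ring
  · calc _ ≤ frobNorm X * euclNorm (Rᵀ *ᵥ e) := euclNorm_kronecker_one_mulVec_le X _
      _ ≤ frobNorm X * (ρa / (1 - ρw) * euclNorm e) :=
          mul_le_mul_of_nonneg_left hRe (frobNorm_nonneg X)
      _ = cu * frobNorm X * euclNorm e := by rw [hcu]; ring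
  · calc _ ≤ frobNorm Z * euclNorm e := euclNorm_mulVec_le_frobNorm Z e
      _ ≤ ρu * frobNorm X / (1 - ρw) * euclNorm e :=
          mul_le_mul_of_nonneg_right hZX (euclNorm_nonneg e)
      _ = ca * frobNorm X * euclNorm e := by rw [hca]; ring

/-- bounds on the norms of the (implicitly differentiated)
gradients `vec(∇_W Φ) = (Z ⊗ I_m) Rᵀ(ŷ - y)`, `vec(∇_U Φ) = (X ⊗ I_m) Rᵀ(ŷ - y)`
and `∇_a Φ = Z(ŷ - y)` of the quadratic loss of a ReLU DEQ. -/
theorem gradient_norm_bounds {m d n : ℕ}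
    (W : Matrix (Fin m) (Fin m) ℝ) (U : Matrix (Fin m) (Fin d) ℝ) (a : Fin m → ℝ)
    (X : Matrix (Fin d) (Fin n) ℝ) (y : Fin n → ℝ) (ρw ρu ρa : ℝ)
    (hW : opNorm W ≤ ρw) (hρw : ρw < 1) (hU : opNorm U ≤ ρu) (ha : euclNorm a ≤ ρa)
    (Z : Matrix (Fin m) (Fin n) ℝ) (hZ : Z = reluM (W * Z + U * X))
    (yhat : Fin n → ℝ) (hyhat : yhat = Zᵀ.mulVec a)
    (D : Matrix (Fin n × Fin m) (Fin n × Fin m) ℝ)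
    (hD : D = Matrix.diagonal fun p => if 0 ≤ (W * Z + U * X) p.2 p.1 then (1 : ℝ) else 0)
    (J : Matrix (Fin n × Fin m) (Fin n × Fin m) ℝ)
    (hJ : J = 1 - D * ((1 : Matrix (Fin n) (Fin n) ℝ) ⊗ₖ W))
    (R : Matrix (Fin n) (Fin n × Fin m) ℝ)
    (hR : R = (Matrix.of fun j p => if p.1 = j then a p.2 else 0 :
        Matrix (Fin n) (Fin n × Fin m) ℝ) * J⁻¹ * D)
    (cw cu ca : ℝ) (hcw : cw = ρu * ρa / (1 - ρw) ^ 2)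
    (hcu : cu = ρa / (1 - ρw)) (hca : ca = ρu / (1 - ρw)) :
    euclNorm ((Z ⊗ₖ (1 : Matrix (Fin m) (Fin m) ℝ)).mulVec (Rᵀ.mulVec (yhat - y))) ≤
        cw * frobNorm X * euclNorm (yhat - y) ∧
      euclNorm ((X ⊗ₖ (1 : Matrix (Fin m) (Fin m) ℝ)).mulVec (Rᵀ.mulVec (yhat - y))) ≤
        cu * frobNorm X * euclNorm (yhat - y) ∧
      euclNorm (Z.mulVec (yhat - y)) ≤ ca * frobNorm X * euclNorm (yhat - y) :=
  gradient_norm_bounds_general W U a X y ρw ρu ρa hW hρw hU ha Z hZ yhat D hD J hJ R hR cw cu ca hcw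
    hcu hca
end

section
/- Let 0 < σ_w² < 1 and let x₁,…,xₙ ∈ ℝ^d satisfy ‖x_i‖₂ = √d for all i and x_i not parallel to x_j for all i ≠ j. Let K ∈ ℝ^{n×n} be the limiting population Gram matrix with entries K_{ij} = Q(cos θ_{ij})/(1 − σ_w²), where cos θ_{ij} ∈ [−1,1] solves cos θ_{ij} = σ_w² Q(cos θ_{ij}) + (1 − σ_w²) x_iᵀx_j/d. Then K is strictly positive definite, i.e. λ_min(K) > 0. -/
open scoped BigOperators Matrix Kronecker
open MeasureTheory ProbabilityTheory Filter

/-!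
On `[-1, 1]` the dual activation has the expansion
`Q x = 1/π + x/2 + (1/π) ∑ qₖ x^(2k+2)` with all `qₖ > 0`, obtained by integrating twice the
series of `(1 - x²)^(-1/2)`. By the Schur product theorem, Hadamard powers of a positive
semidefinite matrix are positive semidefinite, so for such `A` with entries in `[-1, 1]` we get
`Q ∘ A ⪰ (qₘ/π) A^{∘(2m+2)}` for every `m`.

The matrix `c = (cos θᵢⱼ)` is the limit of the contracting iteration
`A ↦ σ_w² Q∘A + (1 - σ_w²) C` started at the cosine matrix `C` of the inputs, hence positive
semidefinite. Its diagonal is `1`, and since the inputs are pairwise non-parallel its off-diagonal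
entries have modulus `< 1`. Thus `c^{∘p} → I`, and for `m` large the bound above makes
`K = (Q ∘ c)/(1 - σ_w²)` uniformly positive definite.
-/

open Real Set Filter Topology Function Matrix

noncomputable section

section PowerSeries

variable {a : ℕ → ℝ} {e : ℕ → ℕ}

lemma summable_natCast_mul_pow_sub_one {r : ℝ} (hr : |r| < 1) :
    Summable fun n : ℕ => (n : ℝ) * r ^ (n - 1) := by
  rw [← summable_nat_add_iff 1]
  refine ((summable_pow_mul_geometric_of_norm_lt_one 1 hr).add
    (summable_geometric_of_abs_lt_one hr)).congr fun n => ?_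
  simp only [Nat.add_sub_cancel, Nat.cast_add, Nat.cast_one, pow_one]
  ring

lemma summable_mul_pow (ha : ∀ k, |a k| ≤ 1) (he : Injective e) {x : ℝ} (hx : |x| < 1) :
    Summable fun k => a k * x ^ e k := by
  refine .of_norm_bounded
    ((summable_geometric_of_abs_lt_one (by rwa [abs_abs])).comp_injective he) fun k => ?_
  rw [norm_mul, norm_pow, Real.norm_eq_abs, Real.norm_eq_abs, Function.comp_apply]
  exact mul_le_of_le_one_left (by positivity) (ha k)

lemma norm_mul_natCast_mul_pow_sub_one_le (ha : ∀ k, |a k| ≤ 1) {x r : ℝ} (hxr : |x| ≤ r) (k : ℕ) :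
    ‖a k * (e k * x ^ (e k - 1))‖ ≤ e k * r ^ (e k - 1) := by
  rw [norm_mul, norm_mul, norm_pow, Real.norm_eq_abs, Real.norm_eq_abs, Real.norm_eq_abs,
    Nat.abs_cast]
  refine mul_le_of_le_one_left (by positivity) (ha k) |>.trans ?_
  gcongr

lemma summable_mul_natCast_mul_pow_sub_one (ha : ∀ k, |a k| ≤ 1) (he : Injective e) {x : ℝ}
    (hx : |x| < 1) : Summable fun k => a k * (e k * x ^ (e k - 1)) :=
  .of_norm_bounded ((summable_natCast_mul_pow_sub_one (by rwa [abs_abs])).comp_injective he)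
    (norm_mul_natCast_mul_pow_sub_one_le ha le_rfl)

lemma hasDerivAt_tsum_mul_pow (ha : ∀ k, |a k| ≤ 1) (he : Injective e) {x : ℝ} (hx : |x| < 1) :
    HasDerivAt (fun y => ∑' k, a k * y ^ e k) (∑' k, a k * (e k * x ^ (e k - 1))) x := by
  obtain ⟨r, hxr, hr1⟩ := exists_between hx
  have hr : |r| < 1 := by rwa [abs_of_pos ((abs_nonneg x).trans_lt hxr)]
  have hball : ∀ y ∈ Ioo (-r) r, |y| ≤ r := fun y hy => abs_le.2 ⟨hy.1.le, hy.2.le⟩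
  refine hasDerivAt_tsum_of_isPreconnected
    ((summable_natCast_mul_pow_sub_one hr).comp_injective he) isOpen_Ioo
    isPreconnected_Ioo (fun k y _ => (hasDerivAt_pow (e k) y).const_mul (a k))
    (fun k y hy => norm_mul_natCast_mul_pow_sub_one_le ha (hball y hy) k)
    (y₀ := 0) ⟨by linarith [abs_nonneg x], by linarith [abs_nonneg x]⟩
    (summable_mul_pow ha he (by simp)) (abs_lt.1 hxr)

lemma eqOn_of_hasDerivAt {f g f' : ℝ → ℝ} {s : Set ℝ} (hs : IsOpen s) (hs' : IsPreconnected s)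
    (hf : ∀ x ∈ s, HasDerivAt f (f' x) x) (hg : ∀ x ∈ s, HasDerivAt g (f' x) x) {x₀ : ℝ}
    (hx₀ : x₀ ∈ s) (h : f x₀ = g x₀) : EqOn f g s :=
  hs.eqOn_of_deriv_eq hs' (fun x hx => (hf x hx).differentiableAt.differentiableWithinAt)
    (fun x hx => (hg x hx).differentiableAt.differentiableWithinAt)
    (fun x hx => by rw [(hf x hx).deriv, (hg x hx).deriv]) hx₀ h

end PowerSeries

section QfSeries

/-- `(1 - x²)^(-1/2) = ∑ invSqrtCoeff k * x^(2k)`. -/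
def invSqrtCoeff (k : ℕ) : ℝ := k.centralBinom / 4 ^ k

lemma invSqrtCoeff_pos (k : ℕ) : 0 < invSqrtCoeff k :=
  div_pos (by exact_mod_cast k.centralBinom_pos) (by positivity)

lemma invSqrtCoeff_succ_mul (k : ℕ) :
    invSqrtCoeff (k + 1) * (2 * k + 2) = invSqrtCoeff k * (2 * k + 1) := by
  have h : ((k : ℝ) + 1) * (k + 1).centralBinom = 2 * (2 * k + 1) * k.centralBinom := by
    exact_mod_cast k.succ_mul_centralBinom_succ
  unfold invSqrtCoeff
  rw [pow_succ]
  field_simp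
  linear_combination 2 * h

lemma invSqrtCoeff_le_one (k : ℕ) : invSqrtCoeff k ≤ 1 := by
  induction k with
  | zero => simp [invSqrtCoeff]
  | succ k ih => nlinarith [invSqrtCoeff_succ_mul k, invSqrtCoeff_pos k, invSqrtCoeff_pos (k + 1)]

lemma abs_invSqrtCoeff_le_one (k : ℕ) : |invSqrtCoeff k| ≤ 1 := by
  rw [abs_of_pos (invSqrtCoeff_pos k)]
  exact invSqrtCoeff_le_one k

def qfCoeff (k : ℕ) : ℝ := invSqrtCoeff k / ((2 * k + 1) * (2 * k + 2))

lemma qfCoeff_pos (k : ℕ) : 0 < qfCoeff k :=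
  div_pos (invSqrtCoeff_pos k) (by positivity)

lemma qfCoeff_le_one_div_sq (k : ℕ) : qfCoeff k ≤ 1 / ((k : ℝ) + 1) ^ 2 := by
  rw [qfCoeff, div_le_div_iff₀ (by positivity) (by positivity)]
  nlinarith [invSqrtCoeff_le_one k, invSqrtCoeff_pos k]

lemma summable_qfCoeff : Summable qfCoeff := by
  refine .of_nonneg_of_le (fun k => (qfCoeff_pos k).le) qfCoeff_le_one_div_sq ?_
  exact_mod_cast (summable_nat_add_iff 1).2 (Real.summable_one_div_nat_pow.2 one_lt_two)

def invSqrtSeries (x : ℝ) : ℝ := ∑' k, invSqrtCoeff k * x ^ (2 * k)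

def arcsinSeries (x : ℝ) : ℝ := ∑' k, invSqrtCoeff k / (2 * k + 1) * x ^ (2 * k + 1)

def qfSeries (x : ℝ) : ℝ := ∑' k, qfCoeff k * x ^ (2 * k + 2)

lemma injective_two_mul_add (j : ℕ) : Injective fun k : ℕ => 2 * k + j :=
  fun _ _ h => by simp only at h; omega

lemma hasDerivAt_invSqrtSeries {x : ℝ} (hx : |x| < 1) :
    HasDerivAt invSqrtSeries (∑' k, invSqrtCoeff k * ((2 * k : ℕ) * x ^ (2 * k - 1))) x :=
  hasDerivAt_tsum_mul_pow abs_invSqrtCoeff_le_one (injective_two_mul_add 0) hx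

lemma hasDerivAt_arcsinSeries {x : ℝ} (hx : |x| < 1) :
    HasDerivAt arcsinSeries (invSqrtSeries x) x := by
  have hc : ∀ k, |invSqrtCoeff k / (2 * k + 1)| ≤ 1 := fun k => by
    rw [abs_of_pos (div_pos (invSqrtCoeff_pos k) (by positivity)), div_le_one (by positivity)]
    linarith [invSqrtCoeff_le_one k, (k.cast_nonneg : (0 : ℝ) ≤ k)]
  unfold arcsinSeries
  convert hasDerivAt_tsum_mul_pow hc (injective_two_mul_add 1) hx using 1
  refine tsum_congr fun k => ?_
  rw [Nat.add_sub_cancel]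
  push_cast
  field_simp

lemma hasDerivAt_qfSeries {x : ℝ} (hx : |x| < 1) :
    HasDerivAt qfSeries (arcsinSeries x) x := by
  have hc : ∀ k, |qfCoeff k| ≤ 1 := fun k => by
    rw [abs_of_pos (qfCoeff_pos k)]
    exact (qfCoeff_le_one_div_sq k).trans
      (div_le_one_of_le₀ (by nlinarith [k.cast_nonneg (α := ℝ)]) (by positivity))
  unfold qfSeries
  convert hasDerivAt_tsum_mul_pow hc (injective_two_mul_add 2) hx using 1
  refine tsum_congr fun k => ?_
  rw [show 2 * k + 2 - 1 = 2 * k + 1 by omega, qfCoeff]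
  push_cast
  field_simp

lemma invSqrtSeries_ode {x : ℝ} (hx : |x| < 1) :
    (∑' k, invSqrtCoeff k * ((2 * k : ℕ) * x ^ (2 * k - 1))) * (1 - x ^ 2) =
      x * invSqrtSeries x := by
  set D := ∑' k, invSqrtCoeff k * ((2 * k : ℕ) * x ^ (2 * k - 1))
  have hD : HasSum (fun k => invSqrtCoeff k * ((2 * k : ℕ) * x ^ (2 * k - 1))) D :=
    (summable_mul_natCast_mul_pow_sub_one abs_invSqrtCoeff_le_one
      (injective_two_mul_add 0) hx).hasSum
  have hshift : HasSum (fun k => invSqrtCoeff k * (2 * k + 1) * x ^ (2 * k + 1)) D := by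
    have h := (hasSum_nat_add_iff' 1).2 hD
    simp only [Finset.sum_range_one, mul_zero, Nat.cast_zero, zero_mul, sub_zero] at h
    refine h.congr_fun fun k => ?_
    rw [show 2 * (k + 1) - 1 = 2 * k + 1 by omega, ← invSqrtCoeff_succ_mul]
    push_cast
    ring
  have hmul : HasSum (fun k => invSqrtCoeff k * (2 * k) * x ^ (2 * k + 1)) (D * x ^ 2) := by
    refine (hD.mul_right (x ^ 2)).congr_fun fun k => ?_
    rcases k.eq_zero_or_pos with rfl | hk
    · simp
    · rw [show 2 * k + 1 = 2 * k - 1 + 2 by omega, pow_add]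
      push_cast
      ring
  have hG : HasSum (fun k => invSqrtCoeff k * x ^ (2 * k + 1)) (x * invSqrtSeries x) := by
    refine ((summable_mul_pow abs_invSqrtCoeff_le_one (injective_two_mul_add 0) hx).hasSum.mul_left
      x).congr_fun fun k => ?_
    ring
  have h := (hshift.sub hmul).unique (hG.congr_fun fun k => by ring)
  linear_combination h

lemma hasDerivAt_sqrt_one_sub_sq {x : ℝ} (hx : x ∈ Ioo (-1 : ℝ) 1) :
    HasDerivAt (fun y => √(1 - y ^ 2)) (-x / √(1 - x ^ 2)) x := by
  have h : 1 - x ^ 2 ≠ 0 := by nlinarith [hx.1, hx.2]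
  convert ((hasDerivAt_pow 2 x).const_sub 1).sqrt h using 1
  field_simp
  ring

lemma invSqrtSeries_zero : invSqrtSeries 0 = 1 := by
  rw [invSqrtSeries, tsum_eq_single 0 fun k hk => by simp [hk]]
  simp [invSqrtCoeff]

lemma invSqrtSeries_eq {x : ℝ} (hx : x ∈ Ioo (-1 : ℝ) 1) :
    invSqrtSeries x = 1 / √(1 - x ^ 2) := by
  refine eq_one_div_of_mul_eq_one_left <|
    eqOn_of_hasDerivAt (f := fun y => invSqrtSeries y * √(1 - y ^ 2)) (g := fun _ => 1)
      (f' := 0) isOpen_Ioo isPreconnected_Ioo (fun y hy => ?_) (fun y _ => hasDerivAt_const y 1)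
      (x₀ := 0) (by norm_num) (by simp [invSqrtSeries_zero]) hx
  have hpos : 0 < 1 - y ^ 2 := by nlinarith [hy.1, hy.2]
  have hy' : |y| < 1 := abs_lt.2 hy
  refine ((hasDerivAt_invSqrtSeries hy').mul (hasDerivAt_sqrt_one_sub_sq hy)).congr_deriv ?_
  have hode := invSqrtSeries_ode hy'
  have hs := Real.mul_self_sqrt hpos.le
  have hs0 : √(1 - y ^ 2) ≠ 0 := (Real.sqrt_pos.2 hpos).ne'
  set D := ∑' k, invSqrtCoeff k * ((2 * k : ℕ) * y ^ (2 * k - 1))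
  rw [Pi.zero_apply]
  field_simp
  linear_combination hode + D * hs

lemma arcsinSeries_eq {x : ℝ} (hx : x ∈ Ioo (-1 : ℝ) 1) : arcsinSeries x = arcsin x :=
  eqOn_of_hasDerivAt (f' := invSqrtSeries) isOpen_Ioo isPreconnected_Ioo
    (fun y hy => hasDerivAt_arcsinSeries (abs_lt.2 hy))
    (fun y hy => invSqrtSeries_eq hy ▸ hasDerivAt_arcsin hy.1.ne' hy.2.ne)
    (x₀ := 0) (by norm_num) (by simp [arcsinSeries]) hx

lemma hasDerivAt_Qf {x : ℝ} (hx : x ∈ Ioo (-1 : ℝ) 1) :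
    HasDerivAt Qf (1 / 2 + arcsin x / π) x := by
  have hpos : 0 < 1 - x ^ 2 := by nlinarith [hx.1, hx.2]
  have hs0 : √(1 - x ^ 2) ≠ 0 := (Real.sqrt_pos.2 hpos).ne'
  have hQ : Qf = fun y => (√(1 - y ^ 2) + (π / 2 + arcsin y) * y) / π := by
    ext y
    rw [Qf, arccos_eq_pi_div_two_sub_arcsin]
    ring
  rw [hQ]
  refine (((hasDerivAt_sqrt_one_sub_sq hx).add
    (((hasDerivAt_arcsin hx.1.ne' hx.2.ne).const_add (π / 2)).mul (hasDerivAt_id x))).div_const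
    π).congr_deriv ?_
  field_simp
  simp only [id]
  ring

lemma qfSeries_eq_of_mem_Ioo {x : ℝ} (hx : x ∈ Ioo (-1 : ℝ) 1) :
    qfSeries x = π * (Qf x - x / 2) - 1 := by
  refine eqOn_of_hasDerivAt (g := fun y => π * (Qf y - y / 2) - 1) (f' := arcsin) isOpen_Ioo
    isPreconnected_Ioo
    (fun y hy => arcsinSeries_eq hy ▸ hasDerivAt_qfSeries (abs_lt.2 hy)) (fun y hy => ?_)
    (x₀ := 0) (by norm_num) ?_ hx
  · refine ((((hasDerivAt_Qf hy).sub ((hasDerivAt_id y).div_const 2))).const_mul π).sub_const 1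
      |>.congr_deriv ?_
    field_simp
    ring
  · simp [qfSeries, Qf]

lemma norm_qfCoeff_mul_pow_le {x : ℝ} (hx : x ∈ Icc (-1 : ℝ) 1) (k : ℕ) :
    ‖qfCoeff k * x ^ (2 * k + 2)‖ ≤ qfCoeff k := by
  rw [norm_mul, norm_pow, Real.norm_of_nonneg (qfCoeff_pos k).le]
  exact mul_le_of_le_one_right (qfCoeff_pos k).le (pow_le_one₀ (norm_nonneg x) (abs_le.2 hx))

lemma hasSum_qfSeries {x : ℝ} (hx : x ∈ Icc (-1 : ℝ) 1) :
    HasSum (fun k => qfCoeff k * x ^ (2 * k + 2)) (qfSeries x) :=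
  (Summable.of_norm_bounded summable_qfCoeff (norm_qfCoeff_mul_pow_le hx)).hasSum

lemma continuous_Qf : Continuous Qf := by
  unfold Qf
  fun_prop

lemma qfSeries_eq {x : ℝ} (hx : x ∈ Icc (-1 : ℝ) 1) : qfSeries x = π * (Qf x - x / 2) - 1 := by
  refine EqOn.of_subset_closure (fun y hy => qfSeries_eq_of_mem_Ioo hy)
    (continuousOn_tsum (fun k => by fun_prop) summable_qfCoeff
      fun k y hy => norm_qfCoeff_mul_pow_le hy k)
    ((continuous_const.mul (continuous_Qf.sub (continuous_id.div_const 2))).sub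
      continuous_const).continuousOn Ioo_subset_Icc_self (by rw [closure_Ioo (by norm_num)]) hx

end QfSeries

section QfLipschitz

lemma monotoneOn_Icc_of_hasDerivAt_nonneg {f f' : ℝ → ℝ} {a b : ℝ} (hf : Continuous f)
    (hd : ∀ x ∈ Ioo a b, HasDerivAt f (f' x) x) (hnonneg : ∀ x ∈ Ioo a b, 0 ≤ f' x) :
    MonotoneOn f (Icc a b) :=
  monotoneOn_of_deriv_nonneg (convex_Icc a b) hf.continuousOn
    (fun x hx => by
      rw [interior_Icc] at hx
      exact (hd x hx).differentiableAt.differentiableWithinAt)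
    fun x hx => by
      rw [interior_Icc] at hx
      exact (hd x hx).deriv ▸ hnonneg x hx

lemma Qf_monotoneOn : MonotoneOn Qf (Icc (-1) 1) :=
  monotoneOn_Icc_of_hasDerivAt_nonneg continuous_Qf (fun _ hx => hasDerivAt_Qf hx) fun x _ => by
    have := neg_pi_div_two_le_arcsin x
    have := pi_pos
    rw [show 1 / 2 + arcsin x / π = (arcsin x + π / 2) / π by field_simp; ring]
    exact div_nonneg (by linarith) pi_pos.le

lemma id_sub_Qf_monotoneOn : MonotoneOn (fun x => x - Qf x) (Icc (-1) 1) :=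
  monotoneOn_Icc_of_hasDerivAt_nonneg (continuous_id.sub continuous_Qf)
    (fun x hx => (hasDerivAt_id x).sub (hasDerivAt_Qf hx)) fun x _ => by
    have := arcsin_le_pi_div_two x
    have := pi_pos
    rw [show 1 - (1 / 2 + arcsin x / π) = (π / 2 - arcsin x) / π by field_simp; ring]
    exact div_nonneg (by linarith) pi_pos.le

lemma Qf_one : Qf 1 = 1 := by
  simp [Qf, pi_ne_zero]

lemma Qf_mem_Icc {x : ℝ} (hx : x ∈ Icc (-1 : ℝ) 1) : Qf x ∈ Icc (0 : ℝ) 1 := by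
  have hneg : Qf (-1) = 0 := by simp [Qf]
  refine ⟨hneg ▸ Qf_monotoneOn (by norm_num) hx hx.1, Qf_one ▸ Qf_monotoneOn hx (by norm_num) hx.2⟩

lemma abs_Qf_sub_Qf_le {x y : ℝ} (hx : x ∈ Icc (-1 : ℝ) 1) (hy : y ∈ Icc (-1 : ℝ) 1) :
    |Qf x - Qf y| ≤ |x - y| := by
  wlog hxy : x ≤ y generalizing x y
  · rw [abs_sub_comm, abs_sub_comm x]
    exact this hy hx (le_of_not_ge hxy)
  have h1 := Qf_monotoneOn hx hy hxy
  have h2 := id_sub_Qf_monotoneOn hx hy hxy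
  rw [abs_sub_comm, abs_sub_comm x, abs_of_nonneg (by linarith), abs_of_nonneg (by linarith)]
  linarith

end QfLipschitz

section Matrix

variable {ι : Type*} [Fintype ι]

open scoped ComplexOrder in
lemma Matrix.PosSemidef.map_pow {𝕜 : Type*} [RCLike 𝕜] {A : Matrix ι ι 𝕜} (hA : A.PosSemidef)
    (k : ℕ) : (A.map (· ^ k)).PosSemidef := by
  induction k with
  | zero =>
    convert posSemidef_vecMulVec_self_star (1 : ι → 𝕜)
    ext
    simp [vecMulVec_apply]
  | succ k ih =>
    convert ih.hadamard hA
    ext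
    simp [pow_succ]

lemma Matrix.PosSemidef.dotProduct_mulVec_nonneg_real {A : Matrix ι ι ℝ} (hA : A.PosSemidef)
    (v : ι → ℝ) : 0 ≤ v ⬝ᵥ (A *ᵥ v) := by
  simpa using hA.dotProduct_mulVec_nonneg v

lemma hasSum_dotProduct_mulVec {β : Type*} {M : β → Matrix ι ι ℝ} {N : Matrix ι ι ℝ}
    (h : ∀ i j, HasSum (fun b => M b i j) (N i j)) (v w : ι → ℝ) :
    HasSum (fun b => v ⬝ᵥ (M b *ᵥ w)) (v ⬝ᵥ (N *ᵥ w)) := by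
  simp only [dotProduct, mulVec]
  exact hasSum_sum fun i _ => (hasSum_sum fun j _ => (h i j).mul_right (w j)).mul_left (v i)

/-- The easy direction of Schoenberg's theorem, with the bound by a single term of the series. -/
lemma Matrix.PosSemidef.mul_dotProduct_map_pow_mulVec_le {A : Matrix ι ι ℝ} (hA : A.PosSemidef)
    {a : ℕ → ℝ} (ha : ∀ k, 0 ≤ a k) {e : ℕ → ℕ} {f : ℝ → ℝ}
    (hf : ∀ i j, HasSum (fun k => a k * A i j ^ e k) (f (A i j))) (v : ι → ℝ) (m : ℕ) :
    a m * (v ⬝ᵥ (A.map (· ^ e m) *ᵥ v)) ≤ v ⬝ᵥ (A.map f *ᵥ v) := by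
  have hsum := hasSum_dotProduct_mulVec (M := fun k => a k • A.map (· ^ e k)) (N := A.map f)
    (fun i j => by simpa using hf i j) v v
  simp only [smul_mulVec, dotProduct_smul, smul_eq_mul] at hsum
  exact le_hasSum hsum m fun k _ =>
    mul_nonneg (ha k) ((hA.map_pow (e k)).dotProduct_mulVec_nonneg_real v)

lemma dotProduct_of_one_mulVec (v : ι → ℝ) :
    v ⬝ᵥ (Matrix.of (fun _ _ => 1 : ι → ι → ℝ) *ᵥ v) = (∑ i, v i) ^ 2 := by
  simp [dotProduct, mulVec, sq, Finset.sum_mul]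

lemma inv_pi_mul_le_dotProduct_map_Qf_mulVec {A : Matrix ι ι ℝ} (hA : A.PosSemidef)
    (h1 : ∀ i j, A i j ∈ Icc (-1 : ℝ) 1) (v : ι → ℝ) (m : ℕ) :
    π⁻¹ * ((∑ i, v i) ^ 2 + qfCoeff m * (v ⬝ᵥ (A.map (· ^ (2 * m + 2)) *ᵥ v))) ≤
      v ⬝ᵥ (A.map Qf *ᵥ v) := by
  have hmap : A.map Qf =
      π⁻¹ • Matrix.of (fun _ _ => 1) + (2⁻¹ : ℝ) • A + π⁻¹ • A.map qfSeries := by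
    ext i j
    simp only [Matrix.map_apply, Matrix.add_apply, Matrix.smul_apply, Matrix.of_apply, smul_eq_mul,
      qfSeries_eq (h1 i j)]
    field_simp
    ring
  have hseries := hA.mul_dotProduct_map_pow_mulVec_le (fun k => (qfCoeff_pos k).le)
    (fun i j => hasSum_qfSeries (h1 i j)) v m
  have hA0 := hA.dotProduct_mulVec_nonneg_real v
  rw [hmap, add_mulVec, add_mulVec, smul_mulVec, smul_mulVec, smul_mulVec, dotProduct_add,
    dotProduct_add, dotProduct_smul, dotProduct_smul, dotProduct_smul, smul_eq_mul, smul_eq_mul,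
    smul_eq_mul, dotProduct_of_one_mulVec]
  have := mul_le_mul_of_nonneg_left hseries (inv_nonneg.2 pi_pos.le)
  linarith

lemma abs_dotProduct_mulVec_le {N : Matrix ι ι ℝ} {ε : ℝ} (hε : 0 ≤ ε) (hN : ∀ i j, |N i j| ≤ ε)
    (v : ι → ℝ) : |v ⬝ᵥ (N *ᵥ v)| ≤ Fintype.card ι * ε * (v ⬝ᵥ v) := by
  calc |v ⬝ᵥ (N *ᵥ v)| ≤ ∑ i, ∑ j, |v i| * ε * |v j| := by
        simp only [dotProduct, mulVec, Finset.mul_sum]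
        refine (Finset.abs_sum_le_sum_abs _ _).trans (Finset.sum_le_sum fun i _ => ?_)
        refine (Finset.abs_sum_le_sum_abs _ _).trans (Finset.sum_le_sum fun j _ => ?_)
        rw [abs_mul, abs_mul, mul_assoc]
        gcongr
        exact hN i j
    _ = ε * (∑ i, |v i|) ^ 2 := by
        rw [sq, Finset.sum_mul_sum, Finset.mul_sum]
        refine Finset.sum_congr rfl fun i _ => ?_
        rw [Finset.mul_sum]
        exact Finset.sum_congr rfl fun j _ => by ring
    _ ≤ ε * (Fintype.card ι * ∑ i, |v i| ^ 2) := by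
        gcongr
        exact sq_sum_le_card_mul_sum_sq
    _ = Fintype.card ι * ε * (v ⬝ᵥ v) := by
        simp only [dotProduct, sq_abs, ← sq]
        ring

/-- Off-diagonal entries of modulus `< 1` die out under Hadamard powers. -/
lemma eventually_half_le_dotProduct_map_pow_mulVec {A : Matrix ι ι ℝ} (hdiag : ∀ i, A i i = 1)
    (hoff : ∀ i j, i ≠ j → |A i j| < 1) :
    ∀ᶠ p in atTop, ∀ v, v ⬝ᵥ v / 2 ≤ v ⬝ᵥ (A.map (· ^ p) *ᵥ v) := by
  classical
  set ε : ℝ := 1 / (2 * (Fintype.card ι + 1))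
  have hε : 0 < ε := by positivity
  have hlim : ∀ i j, Tendsto (fun p => (A.map (· ^ p) - 1) i j) atTop (𝓝 0) := fun i j => by
    by_cases hij : i = j
    · subst hij
      simp [hdiag]
    · simpa [one_apply_ne hij] using tendsto_pow_atTop_nhds_zero_of_abs_lt_one (hoff i j hij)
  have hsmall : ∀ᶠ p in atTop, ∀ i j, |(A.map (· ^ p) - 1) i j| ≤ ε :=
    eventually_all.2 fun i => eventually_all.2 fun j =>
      ((hlim i j).eventually (Icc_mem_nhds (neg_lt_zero.2 hε) hε)).mono fun _ h => abs_le.2 h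
  filter_upwards [hsmall] with p hp v
  have hbound := abs_le.1 (abs_dotProduct_mulVec_le hε.le hp v)
  have hcard : Fintype.card ι * ε ≤ 1 / 2 := by
    rw [mul_one_div, div_le_div_iff₀ (by positivity) (by positivity)]
    linarith
  have hv : 0 ≤ v ⬝ᵥ v := by simpa using dotProduct_star_self_nonneg v
  rw [sub_mulVec, one_mulVec, dotProduct_sub] at hbound
  nlinarith

theorem exists_pos_mul_le_dotProduct_map_Qf_mulVec {A : Matrix ι ι ℝ} (hA : A.PosSemidef)
    (hdiag : ∀ i, A i i = 1) (hoff : ∀ i j, i ≠ j → |A i j| < 1) :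
    ∃ ε > 0, ∀ v, ε * (v ⬝ᵥ v) ≤ v ⬝ᵥ (A.map Qf *ᵥ v) := by
  have h1 : ∀ i j, A i j ∈ Icc (-1 : ℝ) 1 := fun i j => by
    by_cases hij : i = j
    · simp [hij, hdiag]
    · exact abs_le.1 (hoff i j hij).le
  obtain ⟨N, hN⟩ := eventually_atTop.1 (eventually_half_le_dotProduct_map_pow_mulVec hdiag hoff)
  refine ⟨π⁻¹ * qfCoeff N / 2, by have := qfCoeff_pos N; positivity, fun v => ?_⟩
  have hpow := mul_le_mul_of_nonneg_left (hN (2 * N + 2) (by omega) v) (qfCoeff_pos N).le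
  have hQ := inv_pi_mul_le_dotProduct_map_Qf_mulVec hA h1 v N
  have := mul_le_mul_of_nonneg_left (hpow.trans (le_add_of_nonneg_left (sq_nonneg (∑ i, v i))))
    (inv_nonneg.2 pi_pos.le)
  linarith

lemma sum_sq_eq_dotProduct_self [Subsingleton ι] (v : ι → ℝ) : (∑ i, v i) ^ 2 = v ⬝ᵥ v := by
  cases isEmpty_or_nonempty ι with
  | inl _ => simp
  | inr h =>
    obtain ⟨i⟩ := h
    rw [dotProduct, Fintype.sum_subsingleton _ i, Fintype.sum_subsingleton _ i, sq]

theorem inv_pi_mul_le_dotProduct_map_Qf_mulVec_of_subsingleton [Subsingleton ι]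
    {A : Matrix ι ι ℝ} (hA : A.PosSemidef) (h1 : ∀ i j, A i j ∈ Icc (-1 : ℝ) 1) (v : ι → ℝ) :
    π⁻¹ * (v ⬝ᵥ v) ≤ v ⬝ᵥ (A.map Qf *ᵥ v) := by
  have hQ := inv_pi_mul_le_dotProduct_map_Qf_mulVec hA h1 v 0
  have := mul_nonneg (qfCoeff_pos 0).le ((hA.map_pow 2).dotProduct_mulVec_nonneg_real v)
  rw [sum_sq_eq_dotProduct_self] at hQ
  nlinarith [inv_pos.2 pi_pos]

lemma Matrix.PosSemidef.map_Qf {A : Matrix ι ι ℝ} (hA : A.PosSemidef)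
    (h1 : ∀ i j, A i j ∈ Icc (-1 : ℝ) 1) : (A.map Qf).PosSemidef := by
  refine .of_dotProduct_mulVec_nonneg (hA.isHermitian.map Qf fun _ => by simp) fun v => ?_
  have hQ := inv_pi_mul_le_dotProduct_map_Qf_mulVec hA h1 v 0
  have := mul_nonneg (qfCoeff_pos 0).le ((hA.map_pow 2).dotProduct_mulVec_nonneg_real v)
  rw [star_trivial]
  exact le_trans (by positivity) hQ

end Matrix

section FixedPoint

variable {ι : Type*} [Fintype ι]

lemma isClosed_setOf_posSemidef : IsClosed {A : Matrix ι ι ℝ | A.PosSemidef} := by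
  simp only [posSemidef_iff_dotProduct_mulVec, ofPred_and, ofPred_forall]
  exact (isClosed_eq continuous_id.matrix_conjTranspose continuous_id).inter <|
    isClosed_iInter fun v => isClosed_le continuous_const
      (continuous_const.dotProduct (continuous_id.matrix_mulVec continuous_const))

lemma abs_mul_Qf_add_sub_le {s t x y : ℝ} (hs : 0 ≤ s) (hx : x ∈ Icc (-1 : ℝ) 1)
    (hy : y ∈ Icc (-1 : ℝ) 1) : |(s * Qf x + t) - (s * Qf y + t)| ≤ s * |x - y| := by
  rw [add_sub_add_right_eq_sub, ← mul_sub, abs_mul, abs_of_nonneg hs]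
  exact mul_le_mul_of_nonneg_left (abs_Qf_sub_Qf_le hx hy) hs

lemma mul_Qf_add_mem_Icc {s x t : ℝ} (hs0 : 0 ≤ s) (hs1 : s ≤ 1) (hx : x ∈ Icc (-1 : ℝ) 1)
    (ht : t ∈ Icc (-1 : ℝ) 1) : s * Qf x + (1 - s) * t ∈ Icc (-1 : ℝ) 1 := by
  have hQ := Qf_mem_Icc hx
  have h1 := mul_le_mul_of_nonneg_left hQ.2 hs0
  have h2 := mul_nonneg hs0 hQ.1
  have h3 := mul_le_mul_of_nonneg_left ht.2 (sub_nonneg.2 hs1)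
  have h4 := mul_le_mul_of_nonneg_left ht.1 (sub_nonneg.2 hs1)
  constructor <;> linarith

lemma eq_of_eq_Qf_fixedPoint {s t x y : ℝ} (hs0 : 0 ≤ s) (hs1 : s < 1) (hx : x ∈ Icc (-1 : ℝ) 1)
    (hy : y ∈ Icc (-1 : ℝ) 1) (hxf : x = s * Qf x + t) (hyf : y = s * Qf y + t) : x = y := by
  have h := abs_mul_Qf_add_sub_le (t := t) hs0 hx hy
  rw [← hxf, ← hyf] at h
  have : |x - y| = 0 := le_antisymm (by nlinarith [abs_nonneg (x - y)]) (abs_nonneg _)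
  exact sub_eq_zero.1 (abs_eq_zero.1 this)

lemma abs_lt_one_of_eq_Qf_fixedPoint {s t x : ℝ} (hs0 : 0 ≤ s) (hs1 : s < 1)
    (hx : x ∈ Icc (-1 : ℝ) 1) (ht : |t| < 1) (hxf : x = s * Qf x + (1 - s) * t) : |x| < 1 := by
  have hQ := Qf_mem_Icc hx
  rw [hxf, abs_lt]
  constructor <;> nlinarith [abs_lt.1 ht, hQ.1, hQ.2]

/-- The fixed point is the limit of the iteration `A ↦ s • A.map Qf + (1 - s) • C` started at `C`,
which preserves positive semidefiniteness. -/
theorem posSemidef_of_eq_Qf_fixedPoint {s : ℝ} (hs0 : 0 ≤ s) (hs1 : s < 1) {C c : Matrix ι ι ℝ}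
    (hC : C.PosSemidef) (hC1 : ∀ i j, C i j ∈ Icc (-1 : ℝ) 1) (hc1 : ∀ i j, c i j ∈ Icc (-1 : ℝ) 1)
    (hfix : ∀ i j, c i j = s * Qf (c i j) + (1 - s) * C i j) : c.PosSemidef := by
  set Φ : Matrix ι ι ℝ → Matrix ι ι ℝ := fun A => s • A.map Qf + (1 - s) • C
  have hΦ : ∀ A i j, Φ A i j = s * Qf (A i j) + (1 - s) * C i j := fun _ _ _ => rfl
  have hiter : ∀ m, (Φ^[m] C).PosSemidef ∧ ∀ i j, (Φ^[m] C) i j ∈ Icc (-1 : ℝ) 1 := by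
    intro m
    induction m with
    | zero => exact ⟨hC, hC1⟩
    | succ m ih =>
      rw [iterate_succ_apply']
      exact ⟨((ih.1.map_Qf ih.2).smul hs0).add (hC.smul (by linarith)),
        fun i j => mul_Qf_add_mem_Icc hs0 hs1.le (ih.2 i j) (hC1 i j)⟩
  have hdist : ∀ m i j, |(Φ^[m] C) i j - c i j| ≤ 2 * s ^ m := by
    intro m
    induction m with
    | zero =>
      intro i j
      rw [iterate_zero, id, pow_zero, mul_one, abs_le]
      constructor <;> linarith [(hC1 i j).1, (hC1 i j).2, (hc1 i j).1, (hc1 i j).2]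
    | succ m ih =>
      intro i j
      rw [iterate_succ_apply', hΦ, hfix i j, pow_succ]
      refine (abs_mul_Qf_add_sub_le hs0 ((hiter m).2 i j) (hc1 i j)).trans ?_
      nlinarith [ih i j]
  have hlim : Tendsto (fun m => Φ^[m] C) atTop (𝓝 c) := by
    have h2 : Tendsto (fun m => 2 * s ^ m) atTop (𝓝 0) := by
      simpa using (tendsto_pow_atTop_nhds_zero_of_lt_one hs0 hs1).const_mul 2
    refine tendsto_pi_nhds.2 fun i => tendsto_pi_nhds.2 fun j => ?_
    exact tendsto_sub_nhds_zero_iff.1 (squeeze_zero_norm (fun m => hdist m i j) h2)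
  exact isClosed_setOf_posSemidef.mem_of_tendsto hlim (.of_forall fun m => (hiter m).1)

end FixedPoint

section CosineMatrix

variable {ι F : Type*} [NormedAddCommGroup F] [InnerProductSpace ℝ F]

def cosineMatrix (u : ι → F) : Matrix ι ι ℝ :=
  Matrix.of fun i j => inner ℝ (u i) (u j) / (‖u i‖ * ‖u j‖)

lemma cosineMatrix_posSemidef [Fintype ι] (u : ι → F) : (cosineMatrix u).PosSemidef := by
  have h : cosineMatrix u = Matrix.gram ℝ fun i => ‖u i‖⁻¹ • u i := by
    ext i j
    simp only [cosineMatrix, Matrix.gram, Matrix.of_apply, real_inner_smul_left,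
      real_inner_smul_right]
    rw [div_eq_inv_mul, mul_inv]
    ring
  exact h ▸ Matrix.posSemidef_gram ℝ _

lemma cosineMatrix_mem_Icc (u : ι → F) (i j : ι) : cosineMatrix u i j ∈ Icc (-1 : ℝ) 1 :=
  abs_le.1 (abs_real_inner_div_norm_mul_norm_le_one _ _)

lemma cosineMatrix_self {u : ι → F} {i : ι} (h : u i ≠ 0) : cosineMatrix u i i = 1 := by
  rw [cosineMatrix, Matrix.of_apply, real_inner_self_eq_norm_mul_norm]
  exact div_self (mul_self_ne_zero.2 (norm_ne_zero_iff.2 h))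

lemma abs_cosineMatrix_lt_one {u : ι → F} {i j : ι} (h : ∀ r : ℝ, u j ≠ r • u i) :
    |cosineMatrix u i j| < 1 := by
  refine (abs_real_inner_div_norm_mul_norm_le_one _ _).lt_of_ne fun h1 => ?_
  obtain ⟨-, r, -, hr⟩ := (abs_real_inner_div_norm_mul_norm_eq_one_iff _ _).1 h1
  exact h r hr

lemma norm_toLp_eq_euclNorm {κ : Type*} [Fintype κ] (v : κ → ℝ) :
    ‖WithLp.toLp 2 v‖ = euclNorm v := by
  simp [EuclideanSpace.norm_eq, euclNorm]

lemma cosineMatrix_toLp {κ : Type*} [Fintype κ] {x : ι → κ → ℝ} {r : ℝ}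
    (hx : ∀ i, euclNorm (x i) = r) (i j : ι) :
    cosineMatrix (fun i => WithLp.toLp 2 (x i)) i j = (∑ k, x i k * x j k) / r ^ 2 := by
  simp only [cosineMatrix, Matrix.of_apply, norm_toLp_eq_euclNorm, hx,
    EuclideanSpace.inner_toLp_toLp, dotProduct, star_trivial, sq]
  simp_rw [mul_comm (x j _)]

theorem exists_pos_mul_le_dotProduct_map_Qf_mulVec_of_fixedPoint [Fintype ι] {u : ι → F}
    (hu : ∀ i j, i ≠ j → ∀ r : ℝ, u j ≠ r • u i) {s : ℝ} (hs0 : 0 ≤ s) (hs1 : s < 1)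
    {c : Matrix ι ι ℝ} (hc1 : ∀ i j, c i j ∈ Icc (-1 : ℝ) 1)
    (hfix : ∀ i j, c i j = s * Qf (c i j) + (1 - s) * cosineMatrix u i j) :
    ∃ ε > 0, ∀ v, ε * (v ⬝ᵥ v) ≤ v ⬝ᵥ (c.map Qf *ᵥ v) := by
  have hpsd := posSemidef_of_eq_Qf_fixedPoint hs0 hs1 (cosineMatrix_posSemidef u)
    (cosineMatrix_mem_Icc u) hc1 hfix
  cases subsingleton_or_nontrivial ι with
  | inl _ =>
    -- a lone `u i` may be `0`, making `C i i = 0 / 0 = 0`; the constant term of `Q` suffices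
    exact ⟨π⁻¹, inv_pos.2 pi_pos, inv_pi_mul_le_dotProduct_map_Qf_mulVec_of_subsingleton hpsd hc1⟩
  | inr _ =>
    have hne : ∀ i, u i ≠ 0 := fun i hi => by
      obtain ⟨j, hji⟩ := exists_ne i
      exact hu j i hji 0 (by rw [hi, zero_smul])
    refine exists_pos_mul_le_dotProduct_map_Qf_mulVec hpsd (fun i => ?_) fun i j hij => ?_
    · refine eq_of_eq_Qf_fixedPoint hs0 hs1 (hc1 i i) (by norm_num) (hfix i i) ?_
      rw [cosineMatrix_self (hne i), Qf_one]
      ring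
    · exact abs_lt_one_of_eq_Qf_fixedPoint hs0 hs1 (hc1 i j) (abs_cosineMatrix_lt_one (hu i j hij))
        (hfix i j)

end CosineMatrix

lemma lamMin_pos_of_forall_le {n : ℕ} {A : Matrix (Fin n) (Fin n) ℝ} (hn : 0 < n) {ε : ℝ}
    (hε : 0 < ε) (h : ∀ v, ε * (v ⬝ᵥ v) ≤ v ⬝ᵥ (A *ᵥ v)) : 0 < lamMin A := by
  have : Nonempty {v : Fin n → ℝ // ∑ i, v i ^ 2 = 1} :=
    ⟨⟨Pi.single ⟨0, hn⟩ 1, by simp [sq, Pi.single_apply]⟩⟩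
  refine hε.trans_le (le_ciInf fun v => ?_)
  have hv : v.1 ⬝ᵥ v.1 = 1 := by simpa [dotProduct, sq] using v.2
  have hv' := h v.1
  rw [hv, mul_one, dotProduct_comm] at hv'
  exact hv'

/-- the limiting population Gram matrix `K` with entries
`K_{ij} = Q(cos θ_{ij})/(1 - σ_w²)`, where `cos θ_{ij}` solves the fixed-point
equation, is strictly positive definite when the inputs are normalized and
pairwise non-parallel. -/
theorem limiting_population_gram_positive_definite {n d : ℕ} (hn : 0 < n)
    (sw2 : ℝ) (h1 : 0 < sw2) (h2 : sw2 < 1)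
    (x : Fin n → Fin d → ℝ) (hx : ∀ i, euclNorm (x i) = Real.sqrt d)
    (hpar : ∀ i j, i ≠ j → ∀ t : ℝ, x i ≠ t • x j)
    (cθ : Fin n → Fin n → ℝ)
    (hrange : ∀ i j, cθ i j ∈ Set.Icc (-1 : ℝ) 1)
    (hfix : ∀ i j, cθ i j = sw2 * Qf (cθ i j) + (1 - sw2) * ((∑ k, x i k * x j k) / d))
    (K : Matrix (Fin n) (Fin n) ℝ)
    (hK : ∀ i j, K i j = Qf (cθ i j) / (1 - sw2)) :
    0 < lamMin K := by
  set u : Fin n → EuclideanSpace ℝ (Fin d) := fun i => WithLp.toLp 2 (x i)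
  have hC : ∀ i j, (∑ k, x i k * x j k) / d = cosineMatrix u i j := fun i j => by
    rw [cosineMatrix_toLp hx, Real.sq_sqrt d.cast_nonneg]
  simp only [hC] at hfix
  obtain ⟨ε, hε, hle⟩ := exists_pos_mul_le_dotProduct_map_Qf_mulVec_of_fixedPoint
    (fun i j hij r hr => hpar j i hij.symm r (WithLp.toLp_injective 2 hr)) h1.le h2 hrange hfix
  have hK' : K = (1 - sw2)⁻¹ • (Matrix.of cθ).map Qf := by
    ext i j
    rw [hK, div_eq_inv_mul]
    rfl
  refine lamMin_pos_of_forall_le hn (mul_pos (inv_pos.2 (sub_pos.2 h2)) hε) fun v => ?_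
  rw [hK', smul_mulVec, dotProduct_smul, smul_eq_mul, mul_assoc]
  exact mul_le_mul_of_nonneg_left (hle v) (inv_nonneg.2 (sub_pos.2 h2).le)

end
end
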